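/- arXiv:1506.00385 — 5 statements merged into one kernel-verified Lean document; each statement's English description precedes it below -/
import Mathlib

section
/- Let f₁ : ℝ^n → ℝ∪{+∞} be convex proper lsc, α > 0, D symmetric positive definite, x, z ∈ ℝ^n, and ε ≥ 0. Define h(w) = ∇f₀(x)ᵀ(w−x) + (1/(2α))‖w−x‖²_D + f₁(w) − f₁(x) where z = x − αD⁻¹∇f₀(x), and let y be the exact minimizer of h. If ỹ satisfies (1/α)D(z − ỹ) ∈ ∂_ε f₁(ỹ), then h(ỹ) − h(y) ≤ ε and ‖ỹ − y‖² ≤ αμε for any μ > 0 with 1/μ ≤ λ_min(D). -/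
open Matrix

/-- The ε-subdifferential of an extended-real-valued convex function. -/
def epsSubdiff {n : ℕ} (f : (Fin n → ℝ) → EReal) (ε : ℝ) (u : Fin n → ℝ) :
    Set (Fin n → ℝ) :=
  {w | ∀ v : Fin n → ℝ, f u + ((w ⬝ᵥ (v - u) : ℝ) : EReal) - (ε : EReal) ≤ f v}

lemma aux2 (s a : ℝ) (ha : a ≠ 0) : s/(2*a) + s/(2*a) = s/a := by
  field_simp
  ring

lemma aux3 (s a : ℝ) (ha : a ≠ 0) : a * (s/a) = s := by field_simp

lemma aux4 (t m : ℝ) (hm : m ≠ 0) : m * ((1/m)*t) = t := by field_simp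

lemma aux_limit (c d : ℝ) (h0 : 0 ≤ d) (h : ∀ a : ℝ, 0 < a → a < 1 → (1-a)*c ≤ d) : c ≤ d := by
  by_contra hlt
  push_neg at hlt
  have hc0 : 0 < c := lt_of_le_of_lt h0 hlt
  have ha0 : 0 < (c - d)/(2*c) := div_pos (by linarith) (by linarith)
  have ha1 : (c - d)/(2*c) < 1 := by rw [div_lt_one (by linarith)]; linarith
  have h2 := h _ ha0 ha1
  have h3 : (1 - (c - d)/(2*c))*c = (c + d)/2 := by field_simp; ring
  rw [h3] at h2
  linarith

set_option maxHeartbeats 2000000 in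
theorem stmt_7 (n : ℕ) (f₀ : (Fin n → ℝ) → ℝ) (hf₀ : Differentiable ℝ f₀)
    (f₁ : (Fin n → ℝ) → EReal)
    (hconv : ∀ u v : Fin n → ℝ, ∀ a b : ℝ, 0 ≤ a → 0 ≤ b → a + b = 1 →
      f₁ (a • u + b • v) ≤ (a : EReal) * f₁ u + (b : EReal) * f₁ v)
    (hproper : ∃ u, f₁ u ≠ ⊤) (hbot : ∀ u, f₁ u ≠ ⊥) (hlsc : LowerSemicontinuous f₁)
    (x : Fin n → ℝ) (hx : f₁ x ≠ ⊤)
    (α : ℝ) (hα : 0 < α)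
    (D : Matrix (Fin n) (Fin n) ℝ) (hDsym : D.IsSymm) (hDpd : D.PosDef)
    (μ : ℝ) (hμ : 0 < μ) (hμmin : ∀ w : Fin n → ℝ, (1 / μ) * (w ⬝ᵥ w) ≤ w ⬝ᵥ (D *ᵥ w))
    (g : Fin n → ℝ)
    (hg : ∀ d : Fin n → ℝ, HasDerivAt (fun t : ℝ => f₀ (x + t • d)) (g ⬝ᵥ d) 0)
    (ε : ℝ) (hε : 0 ≤ ε)
    (y ty : Fin n → ℝ)
    (hy : ∀ w : Fin n → ℝ,
      ((g ⬝ᵥ (y - x) + 1 / (2 * α) * ((y - x) ⬝ᵥ (D *ᵥ (y - x))) : ℝ) : EReal)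
          + f₁ y - f₁ x ≤
        ((g ⬝ᵥ (w - x) + 1 / (2 * α) * ((w - x) ⬝ᵥ (D *ᵥ (w - x))) : ℝ) : EReal)
          + f₁ w - f₁ x)
    (hty : α⁻¹ • (D *ᵥ ((x - α • (D⁻¹ *ᵥ g)) - ty)) ∈ epsSubdiff f₁ ε ty) :
    (((g ⬝ᵥ (ty - x) + 1 / (2 * α) * ((ty - x) ⬝ᵥ (D *ᵥ (ty - x))) : ℝ) : EReal)
        + f₁ ty - f₁ x)
      - (((g ⬝ᵥ (y - x) + 1 / (2 * α) * ((y - x) ⬝ᵥ (D *ᵥ (y - x))) : ℝ) : EReal)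
        + f₁ y - f₁ x) ≤ (ε : EReal) ∧
    (ty - y) ⬝ᵥ (ty - y) ≤ α * μ * ε := by
  classical
  have hα0 : α ≠ 0 := hα.ne'
  have hsym : ∀ u v : Fin n → ℝ, u ⬝ᵥ (D *ᵥ v) = v ⬝ᵥ (D *ᵥ u) := by
    intro u v; conv_lhs => rw [← hDsym]
    rw [Matrix.mulVec_transpose, dotProduct_comm, ← Matrix.dotProduct_mulVec]
  have hDinv : D *ᵥ (D⁻¹ *ᵥ g) = g := by
    rw [Matrix.mulVec_mulVec,
      Matrix.mul_nonsing_inv D (isUnit_iff_ne_zero.2 hDpd.det_pos.ne'), Matrix.one_mulVec]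
  have master : ∀ (u v : Fin n → ℝ) (a b a' b' : ℝ),
      (a•u + b•v) ⬝ᵥ (D *ᵥ (a'•u + b'•v)) =
        (a*a')*(u ⬝ᵥ (D *ᵥ u)) + (a*b' + b*a')*(u ⬝ᵥ (D *ᵥ v)) + (b*b')*(v ⬝ᵥ (D *ᵥ v)) := by
    intro u v a b a' b'
    simp only [Matrix.mulVec_add, Matrix.mulVec_smul, dotProduct_add, add_dotProduct,
      dotProduct_smul, smul_dotProduct, smul_eq_mul, hsym v u]
    ring
  obtain ⟨u, hu⟩ : ∃ u : Fin n → ℝ, u = ty - x := ⟨_, rfl⟩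
  obtain ⟨v, hv⟩ : ∃ v : Fin n → ℝ, v = y - x := ⟨_, rfl⟩
  obtain ⟨bt, hbt⟩ : ∃ r : ℝ, r = u ⬝ᵥ (D *ᵥ u) := ⟨_, rfl⟩
  obtain ⟨bv, hbv⟩ : ∃ r : ℝ, r = v ⬝ᵥ (D *ᵥ v) := ⟨_, rfl⟩
  obtain ⟨bm, hbm⟩ : ∃ r : ℝ, r = u ⬝ᵥ (D *ᵥ v) := ⟨_, rfl⟩
  obtain ⟨gu, hgu⟩ : ∃ r : ℝ, r = g ⬝ᵥ u := ⟨_, rfl⟩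
  obtain ⟨gv, hgv⟩ : ∃ r : ℝ, r = g ⬝ᵥ v := ⟨_, rfl⟩
  obtain ⟨s, hs⟩ : ∃ r : ℝ, r = (ty - y) ⬝ᵥ (D *ᵥ (ty - y)) := ⟨_, rfl⟩
  have hsval : s = bt - 2*bm + bv := by
    have hvec : ty - y = (1:ℝ)•u + (-1:ℝ)•v := by rw [hu, hv]; module
    rw [hs, hvec, master, hbt, hbm, hbv]; ring
  have hdot0 : 0 ≤ (ty - y) ⬝ᵥ (ty - y) := by
    simpa [dotProduct] using Finset.sum_nonneg fun i _ => mul_self_nonneg ((ty - y) i)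
  have hs0 : 0 ≤ s := by
    have h1 := hμmin (ty - y)
    rw [← hs] at h1
    have : 0 ≤ (1/μ) * ((ty - y) ⬝ᵥ (ty - y)) := by positivity
    linarith
  have hW : ∀ d : Fin n → ℝ,
      (α⁻¹ • (D *ᵥ ((x - α • (D⁻¹ *ᵥ g)) - ty))) ⬝ᵥ d
        = α⁻¹ * ((x - ty) ⬝ᵥ (D *ᵥ d)) - g ⬝ᵥ d := by
    intro d
    have hvec : (x - α • (D⁻¹ *ᵥ g)) - ty = (x - ty) - α • (D⁻¹ *ᵥ g) := by module
    rw [smul_dotProduct, hvec, Matrix.mulVec_sub, Matrix.mulVec_smul, hDinv,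
      sub_dotProduct, smul_dotProduct, dotProduct_comm (D *ᵥ (x - ty)) d, hsym d (x - ty),
      smul_eq_mul, smul_eq_mul]
    field_simp
  have hWy : (α⁻¹ • (D *ᵥ ((x - α • (D⁻¹ *ᵥ g)) - ty))) ⬝ᵥ (y - ty)
      = α⁻¹ * (bt - bm) - (gv - gu) := by
    rw [hW]
    have h1 : (x - ty) ⬝ᵥ (D *ᵥ (y - ty)) = bt - bm := by
      have e1 : x - ty = (-1:ℝ)•u + (0:ℝ)•v := by rw [hu, hv]; module
      have e2 : y - ty = (-1:ℝ)•u + (1:ℝ)•v := by rw [hu, hv]; module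
      rw [e1, e2, master, hbt, hbm]; ring
    have h2 : g ⬝ᵥ (y - ty) = gv - gu := by
      have e2 : y - ty = v - u := by rw [hu, hv]; module
      rw [e2, dotProduct_sub, hgu, hgv]
    rw [h1, h2]
  have hxE : f₁ x = ((f₁ x).toReal : EReal) := (EReal.coe_toReal hx (hbot x)).symm
  obtain ⟨rx, hrx⟩ : ∃ r : ℝ, (f₁ x) = (r : EReal) := ⟨_, hxE⟩
  have htytop : f₁ ty ≠ ⊤ := by
    intro h
    have h1 := hty x
    rw [h] at h1
    rw [EReal.top_add_coe, EReal.top_sub_coe] at h1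
    exact hx (top_le_iff.1 h1)
  have hytop : f₁ y ≠ ⊤ := by
    intro h
    have h1 := hy x
    rw [h, hrx] at h1
    rw [EReal.coe_add_top, EReal.top_sub_coe] at h1
    have h2 := top_le_iff.1 h1
    have h3 : ((g ⬝ᵥ (x - x) + 1 / (2 * α) * ((x - x) ⬝ᵥ (D *ᵥ (x - x))) : ℝ) : EReal)
        + (rx:EReal) - (rx:EReal)
        = ((g ⬝ᵥ (x - x) + 1 / (2 * α) * ((x - x) ⬝ᵥ (D *ᵥ (x - x))) + rx - rx : ℝ) : EReal) := by
      norm_cast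
    rw [h3] at h2
    exact (EReal.coe_ne_top _) h2
  obtain ⟨rty, hrty⟩ : ∃ r : ℝ, (f₁ ty) = (r : EReal) :=
    ⟨_, (EReal.coe_toReal htytop (hbot ty)).symm⟩
  obtain ⟨ry, hry⟩ : ∃ r : ℝ, (f₁ y) = (r : EReal) :=
    ⟨_, (EReal.coe_toReal hytop (hbot y)).symm⟩
  have hA : rty + (α⁻¹ * (bt - bm) - (gv - gu)) - ε ≤ ry := by
    have h1 := hty y
    rw [hrty, hry, hWy] at h1
    have h2 : ((rty + (α⁻¹ * (bt - bm) - (gv - gu)) - ε : ℝ) : EReal) ≤ ((ry : ℝ) : EReal) := by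
      push_cast
      exact h1
    exact_mod_cast h2
  have hyr : ∀ w : Fin n → ℝ, ∀ rw' : ℝ, f₁ w = (rw' : EReal) →
      gv + 1/(2*α) * bv + ry
        ≤ (g ⬝ᵥ (w - x) + 1 / (2 * α) * ((w - x) ⬝ᵥ (D *ᵥ (w - x)))) + rw' := by
    intro w rw' hwE
    have h1 := hy w
    rw [hrx, hry, hwE] at h1
    have h2 : ((gv + 1/(2*α)*bv + ry - rx : ℝ) : EReal)
        ≤ (((g ⬝ᵥ (w - x) + 1 / (2 * α) * ((w - x) ⬝ᵥ (D *ᵥ (w - x)))) + rw' - rx : ℝ) : EReal) := by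
      push_cast
      rw [hgv, hbv, hv]
      exact h1
    have := EReal.coe_le_coe_iff.1 h2
    linarith
  have hB : gv + 1/(2*α)*bv + ry ≤ gu + 1/(2*α)*bt + rty := by
    have h1 := hyr ty rty hrty
    rw [← hu, ← hgu, ← hbt] at h1
    linarith
  have hC : ∀ a : ℝ, 0 < a → a < 1 →
      (1 - a) * s / (2*α) ≤ (gu + 1/(2*α)*bt + rty) - (gv + 1/(2*α)*bv + ry) := by
    intro a ha0 ha1
    obtain ⟨b, hb⟩ : ∃ b : ℝ, b = 1 - a := ⟨_, rfl⟩
    have hb0 : 0 ≤ b := by rw [hb]; linarith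
    have hab : a + b = 1 := by rw [hb]; ring
    have hcv := hconv ty y a b (le_of_lt ha0) hb0 hab
    rw [hrty, hry] at hcv
    have hcv' : f₁ (a • ty + b • y) ≤ ((a * rty + b * ry : ℝ) : EReal) := by
      calc f₁ (a • ty + b • y) ≤ (a : EReal) * (rty:ℝ) + (b : EReal) * (ry:ℝ) := hcv
        _ = ((a * rty + b * ry : ℝ) : EReal) := by norm_cast
    have hwtop : f₁ (a • ty + b • y) ≠ ⊤ :=
      fun h => (EReal.coe_ne_top _) (top_le_iff.1 (h ▸ hcv'))
    obtain ⟨rw', hwE⟩ : ∃ r : ℝ, f₁ (a • ty + b • y) = (r : EReal) :=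
      ⟨_, (EReal.coe_toReal hwtop (hbot _)).symm⟩
    have hwreal : rw' ≤ a * rty + b * ry := by
      rw [hwE] at hcv'
      exact_mod_cast hcv'
    have hvec : a • ty + b • y - x = a • u + b • v := by
      rw [hu, hv, hb]; module
    have hq1 : g ⬝ᵥ (a • ty + b • y - x) = a * gu + b * gv := by
      rw [hvec, dotProduct_add, dotProduct_smul, dotProduct_smul, smul_eq_mul, smul_eq_mul,
        hgu, hgv]
    have hq2 : (a • ty + b • y - x) ⬝ᵥ (D *ᵥ (a • ty + b • y - x))
        = a^2*bt + 2*a*b*bm + b^2*bv := by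
      rw [hvec, master, hbt, hbm, hbv]; ring
    have hkey := hyr (a • ty + b • y) rw' hwE
    rw [hq1, hq2] at hkey
    have heq : a * gu + b * gv + 1 / (2 * α) * (a^2*bt + 2*a*b*bm + b^2*bv)
        = a * (gu + 1/(2*α)*bt) + b * (gv + 1/(2*α)*bv) - a*b/(2*α) * s := by
      rw [hsval, hb]
      field_simp
      ring
    have hfinal : gv + 1/(2*α)*bv + ry
        ≤ a * (gu + 1/(2*α)*bt + rty) + b * (gv + 1/(2*α)*bv + ry) - a*b/(2*α) * s := by
      nlinarith [hkey, heq, hwreal]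
    have ha3 : 0 ≤ (gu + 1/(2*α)*bt + rty) - (gv + 1/(2*α)*bv + ry) - b/(2*α)*s := by
      by_contra hneg
      push_neg at hneg
      have hprod := mul_pos ha0 (neg_pos.2 hneg)
      have heq2 : a * -((gu + 1/(2*α)*bt + rty) - (gv + 1/(2*α)*bv + ry) - b/(2*α)*s)
          = (gv + 1/(2*α)*bv + ry)
            - (a * (gu + 1/(2*α)*bt + rty) + b * (gv + 1/(2*α)*bv + ry) - a*b/(2*α) * s) := by
        rw [hb]; ring
      rw [heq2] at hprod
      linarith
    have hb' : (1 - a) * s / (2*α) = (1-a)/(2*α)*s := by ring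
    rw [hb'] at *
    rw [hb] at ha3
    linarith
  obtain ⟨Δ, hΔ⟩ : ∃ r : ℝ, r = (gu + 1/(2*α)*bt + rty) - (gv + 1/(2*α)*bv + ry) := ⟨_, rfl⟩
  have hΔ0 : 0 ≤ Δ := by rw [hΔ]; linarith
  have hAA : Δ + s / (2*α) ≤ ε := by
    rw [hΔ, hsval]
    have h2a : 1/(2*α)*bt - 1/(2*α)*bv + (bt - 2*bm + bv)/(2*α) = α⁻¹*(bt - bm) := by
      field_simp; ring
    linarith only [hA, h2a]
  have hSΔ : s / (2*α) ≤ Δ := by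
    apply aux_limit _ _ hΔ0
    intro a ha0 ha1
    have h2 := hC a ha0 ha1
    rw [← hΔ] at h2
    calc (1-a)*(s/(2*α)) = (1-a)*s/(2*α) := by ring
      _ ≤ Δ := h2
  have hsαε : s ≤ α * ε := by
    have h2 : s/α ≤ ε := by
      have h1 : s/(2*α) + s/(2*α) = s/α := aux2 s α hα0
      linarith only [h1, hAA, hSΔ]
    have h3 := mul_le_mul_of_nonneg_left h2 hα.le
    have h4 : α * (s/α) = s := aux3 s α hα0
    linarith only [h2, h3, h4]
  constructor
  · rw [hrty, hry, hrx, ← hu, ← hv, ← hbt, ← hbv, ← hgu, ← hgv]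
    have hgoal : ((gu + 1 / (2 * α) * bt + rty - rx : ℝ) : EReal)
        - ((gv + 1 / (2 * α) * bv + ry - rx : ℝ) : EReal) ≤ (ε : EReal) := by
      rw [← EReal.coe_sub, EReal.coe_le_coe_iff]
      have h5 : (0:ℝ) ≤ s/(2*α) := by positivity
      linarith only [hAA, hΔ, h5]
    calc ((gu + 1 / (2 * α) * bt : ℝ) : EReal) + (rty:EReal) - (rx:EReal)
          - (((gv + 1 / (2 * α) * bv : ℝ):EReal) + (ry:EReal) - (rx:EReal))
        = ((gu + 1 / (2 * α) * bt + rty - rx : ℝ) : EReal)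
          - ((gv + 1 / (2 * α) * bv + ry - rx : ℝ) : EReal) := by norm_cast
      _ ≤ (ε : EReal) := hgoal
  · have h1 := hμmin (ty - y)
    rw [← hs] at h1
    have h2 : (1/μ) * ((ty - y) ⬝ᵥ (ty - y)) ≤ α * ε := le_trans h1 hsαε
    have h3 := mul_le_mul_of_nonneg_left h2 hμ.le
    have h4 : μ * ((1/μ) * ((ty - y) ⬝ᵥ (ty - y))) = (ty - y) ⬝ᵥ (ty - y) := aux4 _ μ hμ.ne'
    rw [h4] at h3
    linarith only [h3]
end

section
/- Let f : ℝ → ℝ be defined by f(x) = x²/2, and define sequences x⁽⁰⁾ = 2, ỹ⁽ᵏ⁾ = x⁽ᵏ⁾ − (1/2)^(k+1), x⁽ᵏ⁺¹⁾ = ỹ⁽ᵏ⁾. Then x⁽ᵏ⁾ = 1 + (1/2)^k for all k, so the sequence converges to 1, which is not a stationary point of f (the only stationary point being 0). -/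
open Filter Topology

theorem eq_add_half_pow_of_sub_half_pow {x : ℕ → ℝ} {c : ℝ} (h0 : x 0 = c + 1)
    (hrec : ∀ k : ℕ, x (k + 1) = x k - (1 / 2 : ℝ) ^ (k + 1)) (k : ℕ) :
    x k = c + (1 / 2 : ℝ) ^ k := by
  induction k with
  | zero => simp [h0]
  | succ n ih => rw [hrec n, ih]; ring

theorem tendsto_const_add_half_pow (c : ℝ) :
    Tendsto (fun k : ℕ => c + (1 / 2 : ℝ) ^ k) atTop (𝓝 c) := by
  simpa using tendsto_const_nhds.add
    (tendsto_pow_atTop_nhds_zero_of_lt_one (by norm_num : (0 : ℝ) ≤ 1 / 2) (by norm_num))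

theorem deriv_sq_div_two (t : ℝ) : deriv (fun s : ℝ => s ^ 2 / 2) t = t := by
  rw [deriv_div_const, deriv_pow_field]
  ring

theorem stmt_9 (x : ℕ → ℝ) (h0 : x 0 = 2)
    (hrec : ∀ k : ℕ, x (k + 1) = x k - (1 / 2 : ℝ) ^ (k + 1)) :
    (∀ k : ℕ, x k = 1 + (1 / 2 : ℝ) ^ k) ∧
    Tendsto x atTop (𝓝 1) ∧
    deriv (fun t : ℝ => t ^ 2 / 2) 1 ≠ 0 ∧
    (∀ t : ℝ, deriv (fun s : ℝ => s ^ 2 / 2) t = 0 ↔ t = 0) := by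
  have hform : ∀ k, x k = 1 + (1 / 2 : ℝ) ^ k :=
    eq_add_half_pow_of_sub_half_pow (by rw [h0]; norm_num) hrec
  refine ⟨hform, ?_, ?_, fun t => ?_⟩
  · simpa only [← funext hform] using tendsto_const_add_half_pow 1
  · rw [deriv_sq_div_two]; exact one_ne_zero
  · rw [deriv_sq_div_two]
end

section
/- Let f₀ : ℝ^n → ℝ be differentiable, f₁ convex proper lsc bounded below, f = f₀ + f₁ bounded below by ℓ. Let {x⁽ᵏ⁾}, {ỹ⁽ᵏ⁾} ⊂ dom(f₁), Δ⁽ᵏ⁾ < 0, and λ⁽ᵏ⁾ ∈ (0,1] satisfy the Armijo condition f(x⁽ᵏ⁾ + λ⁽ᵏ⁾(ỹ⁽ᵏ⁾ − x⁽ᵏ⁾)) ≤ f(x⁽ᵏ⁾) + βλ⁽ᵏ⁾Δ⁽ᵏ⁾ with β ∈ (0,1), and suppose f(x⁽ᵏ⁺¹⁾) ≤ f(x⁽ᵏ⁾ + λ⁽ᵏ⁾(ỹ⁽ᵏ⁾ − x⁽ᵏ⁾)). Then 0 ≤ −Σ_{k=0}^∞ λ⁽ᵏ⁾Δ⁽ᵏ⁾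 ≤ (f(x⁽⁰⁾) − ℓ)/β < ∞. -/
/-!
Along the iterates the objective `F k = f(x⁽ᵏ⁾)` is finite, and the Armijo condition followed by
the non-increase step gives `F (k+1) + β λ⁽ᵏ⁾ (-Δ⁽ᵏ⁾) ≤ F k`. Telescoping, every partial sum of
`β λ⁽ᵏ⁾ (-Δ⁽ᵏ⁾)` is at most `F 0 - ℓ`, so the nonnegative series converges with the same bound.
-/

theorem add_sum_range_le_of_add_le {F c : ℕ → ℝ} (hstep : ∀ k, F (k + 1) + c k ≤ F k) (N : ℕ) :
    F N + ∑ k ∈ Finset.range N, c k ≤ F 0 := by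
  induction N with
  | zero => simp
  | succ N ih =>
    rw [Finset.sum_range_succ]
    linarith [hstep N]

theorem summable_and_tsum_le_of_add_le {F c : ℕ → ℝ} {ℓ : ℝ} (hc : ∀ k, 0 ≤ c k)
    (hstep : ∀ k, F (k + 1) + c k ≤ F k) (hlow : ∀ k, ℓ ≤ F k) :
    Summable c ∧ ∑' k, c k ≤ F 0 - ℓ := by
  have hpartial : ∀ N, ∑ k ∈ Finset.range N, c k ≤ F 0 - ℓ := fun N => by
    linarith [add_sum_range_le_of_add_le hstep N, hlow N]
  have hsum : Summable c := summable_of_sum_range_le hc hpartial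
  exact ⟨hsum, hsum.tsum_le_of_sum_range_le hpartial⟩

theorem EReal.coe_add_eq_coe_add_toReal (r : ℝ) {e : EReal} (htop : e ≠ ⊤) (hbot : e ≠ ⊥) :
    (r : EReal) + e = ((r + e.toReal : ℝ) : EReal) := by
  rw [EReal.coe_add, EReal.coe_toReal htop hbot]

theorem stmt_12_general (n : ℕ) (f₀ : (Fin n → ℝ) → ℝ)
    (f₁ : (Fin n → ℝ) → EReal)
    (ℓ : ℝ) (hbdd : ∀ u : Fin n → ℝ, (ℓ : EReal) ≤ ((f₀ u : ℝ) : EReal) + f₁ u)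
    (x ty : ℕ → (Fin n → ℝ)) (hdom : ∀ k, f₁ (x k) ≠ ⊤ ∧ f₁ (ty k) ≠ ⊤)
    (Δ : ℕ → ℝ) (hΔ : ∀ k, Δ k < 0)
    (lam : ℕ → ℝ) (hlam : ∀ k, lam k ∈ Set.Ioc (0 : ℝ) 1)
    (β : ℝ) (hβ : β ∈ Set.Ioo (0 : ℝ) 1)
    (harmijo : ∀ k,
      ((f₀ (x k + lam k • (ty k - x k)) : ℝ) : EReal) + f₁ (x k + lam k • (ty k - x k)) ≤
        ((f₀ (x k) : ℝ) : EReal) + f₁ (x k) + ((β * lam k * Δ k : ℝ) : EReal))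
    (hdecr : ∀ k,
      ((f₀ (x (k + 1)) : ℝ) : EReal) + f₁ (x (k + 1)) ≤
        ((f₀ (x k + lam k • (ty k - x k)) : ℝ) : EReal) + f₁ (x k + lam k • (ty k - x k))) :
    (∀ k, 0 ≤ -(lam k * Δ k)) ∧
    Summable (fun k => -(lam k * Δ k)) ∧
    (β : EReal) * ((∑' k, -(lam k * Δ k) : ℝ) : EReal) ≤
      (((f₀ (x 0) : ℝ) : EReal) + f₁ (x 0)) - (ℓ : EReal) := by
  have hnonneg : ∀ k, 0 ≤ -(lam k * Δ k) := fun k => by nlinarith [(hlam k).1, hΔ k]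
  have hbot : ∀ u, f₁ u ≠ ⊥ := fun u hu => by
    simpa [hu] using hbdd u
  set F : ℕ → ℝ := fun k => f₀ (x k) + (f₁ (x k)).toReal
  have hF : ∀ k, ((f₀ (x k) : ℝ) : EReal) + f₁ (x k) = F k := fun k =>
    EReal.coe_add_eq_coe_add_toReal _ (hdom k).1 (hbot _)
  have hstep : ∀ k, F (k + 1) + β * -(lam k * Δ k) ≤ F k := fun k => by
    have h := (hdecr k).trans (harmijo k)
    rw [hF, hF] at h
    have h' : F (k + 1) ≤ F k + β * lam k * Δ k := by exact_mod_cast h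
    linarith
  have hlow : ∀ k, ℓ ≤ F k := fun k => by exact_mod_cast (hF k ▸ hbdd (x k))
  obtain ⟨hsum, htsum⟩ := summable_and_tsum_le_of_add_le
    (fun k => mul_nonneg hβ.1.le (hnonneg k)) hstep hlow
  refine ⟨hnonneg, (summable_mul_left_iff hβ.1.ne').mp hsum, ?_⟩
  rw [tsum_mul_left] at htsum
  rw [hF]
  exact_mod_cast htsum

theorem stmt_12 (n : ℕ) (f₀ : (Fin n → ℝ) → ℝ) (hf₀ : Differentiable ℝ f₀)
    (f₁ : (Fin n → ℝ) → EReal)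
    (hconv : ∀ u v : Fin n → ℝ, ∀ a b : ℝ, 0 ≤ a → 0 ≤ b → a + b = 1 →
      f₁ (a • u + b • v) ≤ (a : EReal) * f₁ u + (b : EReal) * f₁ v)
    (hproper : ∃ u, f₁ u ≠ ⊤) (hbot : ∀ u, f₁ u ≠ ⊥) (hlsc : LowerSemicontinuous f₁)
    (hf₁bdd : ∃ c : ℝ, ∀ u, (c : EReal) ≤ f₁ u)
    (ℓ : ℝ) (hbdd : ∀ u : Fin n → ℝ, (ℓ : EReal) ≤ ((f₀ u : ℝ) : EReal) + f₁ u)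
    (x ty : ℕ → (Fin n → ℝ)) (hdom : ∀ k, f₁ (x k) ≠ ⊤ ∧ f₁ (ty k) ≠ ⊤)
    (Δ : ℕ → ℝ) (hΔ : ∀ k, Δ k < 0)
    (lam : ℕ → ℝ) (hlam : ∀ k, lam k ∈ Set.Ioc (0 : ℝ) 1)
    (β : ℝ) (hβ : β ∈ Set.Ioo (0 : ℝ) 1)
    (harmijo : ∀ k,
      ((f₀ (x k + lam k • (ty k - x k)) : ℝ) : EReal) + f₁ (x k + lam k • (ty k - x k)) ≤
        ((f₀ (x k) : ℝ) : EReal) + f₁ (x k) + ((β * lam k * Δ k : ℝ) : EReal))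
    (hdecr : ∀ k,
      ((f₀ (x (k + 1)) : ℝ) : EReal) + f₁ (x (k + 1)) ≤
        ((f₀ (x k + lam k • (ty k - x k)) : ℝ) : EReal) + f₁ (x k + lam k • (ty k - x k))) :
    (∀ k, 0 ≤ -(lam k * Δ k)) ∧
    Summable (fun k => -(lam k * Δ k)) ∧
    (β : EReal) * ((∑' k, -(lam k * Δ k) : ℝ) : EReal) ≤
      (((f₀ (x 0) : ℝ) : EReal) + f₁ (x 0)) - (ℓ : EReal) :=
  stmt_12_general n f₀ f₁ ℓ hbdd x ty hdom Δ hΔ lam hlam β hβ harmijo hdecr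
end

section
/- Let f₁ : ℝ^n → ℝ∪{+∞} be convex proper lsc, x ∈ dom(f₁), α > 0 with α ≤ α_max, and D symmetric positive definite with eigenvalues in [1/μ, μ], μ ≥ 1. Set z = x − αD⁻¹∇f₀(x), h̃(w) = ∇f₀(x)ᵀ(w−x) + (γ/(2α))‖w−x‖²_D + f₁(w) − f₁(x) with γ ∈ [0,1]. If ỹ satisfies (1/α)D(z − ỹ) ∈ ∂_ε f₁(ỹ) for some ε ≥ 0, then (1/(2α_max μ))‖ỹ − x‖² ≤ −h̃(ỹ) + ε. -/
open Matrix

/-! Testing the ε-subgradient inequality at `x` gives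
`f₁ ỹ + (1/α) ‖ỹ - x‖²_D + gᵀ(ỹ - x) - ε ≤ f₁ x`, i.e. `-h̃ ỹ + ε ≥ ((2 - γ)/(2α)) ‖ỹ - x‖²_D`.
Since `γ ≤ 1`, `α ≤ α_max` and `D ⪰ (1/μ) I`, the right side dominates `‖ỹ - x‖² / (2 α_max μ)`. -/

section EpsSubdiff

variable {n : ℕ} {f : (Fin n → ℝ) → EReal} {ε : ℝ} {u v w : Fin n → ℝ}

theorem ne_top_of_mem_epsSubdiff (hw : w ∈ epsSubdiff f ε u) (hv : f v ≠ ⊤) : f u ≠ ⊤ := by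
  intro hu
  have hwv := hw v
  rw [hu, EReal.top_add_coe, EReal.top_sub_coe, top_le_iff] at hwv
  exact hv hwv

theorem toReal_add_dotProduct_sub_le_of_mem_epsSubdiff (hu : f u ≠ ⊥) (hv : f v ≠ ⊥)
    (hw : w ∈ epsSubdiff f ε u) (hv_top : f v ≠ ⊤) :
    (f u).toReal + w ⬝ᵥ (v - u) - ε ≤ (f v).toReal := by
  have hwv := hw v
  rw [← EReal.coe_toReal (ne_top_of_mem_epsSubdiff hw hv_top) hu,
    ← EReal.coe_toReal hv_top hv] at hwv
  exact_mod_cast hwv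

end EpsSubdiff

theorem inv_smul_mulVec_gradStep_sub_dotProduct {𝕜 ι : Type*} [Field 𝕜] [Fintype ι]
    [DecidableEq ι] {D : Matrix ι ι 𝕜} (hD : IsUnit D.det) {α : 𝕜} (hα : α ≠ 0)
    (g x y : ι → 𝕜) :
    (α⁻¹ • (D *ᵥ ((x - α • (D⁻¹ *ᵥ g)) - y))) ⬝ᵥ (x - y) =
      α⁻¹ * ((y - x) ⬝ᵥ (D *ᵥ (y - x))) + g ⬝ᵥ (y - x) := by
  have hstep : D *ᵥ ((x - α • (D⁻¹ *ᵥ g)) - y) = D *ᵥ (x - y) - α • g := by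
    rw [sub_right_comm, mulVec_sub, mulVec_smul, mulVec_mulVec, mul_nonsing_inv _ hD,
      one_mulVec]
  have hxy : x - y = -(y - x) := (neg_sub y x).symm
  rw [hstep, smul_dotProduct, sub_dotProduct, dotProduct_comm, smul_dotProduct, hxy,
    mulVec_neg, neg_dotProduct, dotProduct_neg, neg_neg, dotProduct_neg, smul_eq_mul]
  field_simp
  ring

theorem stmt_15_general (n : ℕ)
    (f₁ : (Fin n → ℝ) → EReal)
    (hbot : ∀ u, f₁ u ≠ ⊥)
    (x : Fin n → ℝ) (hx : f₁ x ≠ ⊤)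
    (α αmax : ℝ) (hα : 0 < α) (hαmax : α ≤ αmax)
    (μ : ℝ) (hμ : 1 ≤ μ)
    (D : Matrix (Fin n) (Fin n) ℝ) (hDpd : D.PosDef)
    (heig : ∀ w : Fin n → ℝ,
      (1 / μ) * (w ⬝ᵥ w) ≤ w ⬝ᵥ (D *ᵥ w) ∧ w ⬝ᵥ (D *ᵥ w) ≤ μ * (w ⬝ᵥ w))
    (g : Fin n → ℝ)
    (γ : ℝ) (hγ : γ ∈ Set.Icc (0 : ℝ) 1)
    (ε : ℝ) (ty : Fin n → ℝ)
    (hty : α⁻¹ • (D *ᵥ ((x - α • (D⁻¹ *ᵥ g)) - ty)) ∈ epsSubdiff f₁ ε ty) :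
    ((1 / (2 * αmax * μ) * ((ty - x) ⬝ᵥ (ty - x)) : ℝ) : EReal) ≤
      -(((g ⬝ᵥ (ty - x) + γ / (2 * α) * ((ty - x) ⬝ᵥ (D *ᵥ (ty - x))) : ℝ) : EReal)
          + f₁ ty - f₁ x) + (ε : EReal) := by
  set S := (ty - x) ⬝ᵥ (ty - x)
  set Q := (ty - x) ⬝ᵥ (D *ᵥ (ty - x))
  have hdescent := toReal_add_dotProduct_sub_le_of_mem_epsSubdiff (hbot ty) (hbot x) hty hx
  rw [inv_smul_mulVec_gradStep_sub_dotProduct hDpd.det_pos.ne'.isUnit hα.ne'] at hdescent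
  have hμ0 : 0 < μ := one_pos.trans_le hμ
  have hS : 0 ≤ S := dotProduct_self_star_nonneg (ty - x)
  have hQ : 0 ≤ Q := le_trans (by positivity) (heig (ty - x)).1
  have hquad : 1 / (2 * αmax * μ) * S ≤ (α⁻¹ - γ / (2 * α)) * Q :=
    calc 1 / (2 * αmax * μ) * S ≤ 1 / (2 * α) * (1 / μ * S) := by
          rw [← mul_assoc, one_div_mul_one_div]
          gcongr
      _ ≤ 1 / (2 * α) * Q := by gcongr; exact (heig (ty - x)).1
      _ ≤ (α⁻¹ - γ / (2 * α)) * Q := by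
          have hcoef : α⁻¹ - γ / (2 * α) = (2 - γ) / (2 * α) := by field_simp
          rw [hcoef]
          gcongr
          linarith [hγ.2]
  rw [← EReal.coe_toReal (ne_top_of_mem_epsSubdiff hty hx) (hbot ty),
    ← EReal.coe_toReal hx (hbot x)]
  exact_mod_cast (by linarith : 1 / (2 * αmax * μ) * S ≤
    -(g ⬝ᵥ (ty - x) + γ / (2 * α) * Q + (f₁ ty).toReal - (f₁ x).toReal) + ε)

theorem stmt_15 (n : ℕ) (f₀ : (Fin n → ℝ) → ℝ) (hf₀ : Differentiable ℝ f₀)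
    (f₁ : (Fin n → ℝ) → EReal)
    (hconv : ∀ u v : Fin n → ℝ, ∀ a b : ℝ, 0 ≤ a → 0 ≤ b → a + b = 1 →
      f₁ (a • u + b • v) ≤ (a : EReal) * f₁ u + (b : EReal) * f₁ v)
    (hproper : ∃ u, f₁ u ≠ ⊤) (hbot : ∀ u, f₁ u ≠ ⊥) (hlsc : LowerSemicontinuous f₁)
    (x : Fin n → ℝ) (hx : f₁ x ≠ ⊤)
    (α αmax : ℝ) (hα : 0 < α) (hαmax : α ≤ αmax)
    (μ : ℝ) (hμ : 1 ≤ μ)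
    (D : Matrix (Fin n) (Fin n) ℝ) (hDsym : D.IsSymm) (hDpd : D.PosDef)
    (heig : ∀ w : Fin n → ℝ,
      (1 / μ) * (w ⬝ᵥ w) ≤ w ⬝ᵥ (D *ᵥ w) ∧ w ⬝ᵥ (D *ᵥ w) ≤ μ * (w ⬝ᵥ w))
    (g : Fin n → ℝ)
    (hg : ∀ d : Fin n → ℝ, HasDerivAt (fun t : ℝ => f₀ (x + t • d)) (g ⬝ᵥ d) 0)
    (γ : ℝ) (hγ : γ ∈ Set.Icc (0 : ℝ) 1)
    (ε : ℝ) (hε : 0 ≤ ε) (ty : Fin n → ℝ)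
    (hty : α⁻¹ • (D *ᵥ ((x - α • (D⁻¹ *ᵥ g)) - ty)) ∈ epsSubdiff f₁ ε ty) :
    ((1 / (2 * αmax * μ) * ((ty - x) ⬝ᵥ (ty - x)) : ℝ) : EReal) ≤
      -(((g ⬝ᵥ (ty - x) + γ / (2 * α) * ((ty - x) ⬝ᵥ (D *ᵥ (ty - x))) : ℝ) : EReal)
          + f₁ ty - f₁ x) + (ε : EReal) :=
  stmt_15_general n f₁ hbot x hx α αmax hα hαmax μ hμ D hDpd heig g γ hγ ε ty hty
end

section
/- Let g : ℝ^m → ℝ∪{+∞} be convex proper lsc, A ∈ ℝ^{m×n}, f₁(x) = g(Ax), α > 0, D symmetric positive definite, z ∈ ℝ^n, v ∈ ℝ^m, and ỹ = z − αD⁻¹Aᵀv. Define the primal function h(y) = (1/(2α))‖y − z‖²_D + f₁(y) + C and the dual function Ψ(v) = −(1/(2α))‖αD⁻¹Aᵀv − z‖²_D − g*(v) + (1/(2α))‖z‖²_D + C (for the same constant C). If the duality gap satisfies h(ỹ) − Ψ(v) ≤ ε for some ε ≥ 0, then (1/α)D(z − ỹ) ∈ ∂_ε f₁(ỹ). -/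
open Matrix

/-- Convex conjugate of an extended-real-valued function on `ℝ^k`. -/
noncomputable def conjFn {k : ℕ} (f : (Fin k → ℝ) → EReal) (y : Fin k → ℝ) : EReal :=
  ⨆ x : Fin k → ℝ, ((x ⬝ᵥ y : ℝ) : EReal) - f x

/-- Primal function `h(y) = (1/(2α))‖y−z‖²_D + f₁(y) + C`. -/
noncomputable def primalFn {n : ℕ} (α : ℝ) (D : Matrix (Fin n) (Fin n) ℝ)
    (z : Fin n → ℝ) (f₁ : (Fin n → ℝ) → EReal) (C : ℝ) (y : Fin n → ℝ) : EReal :=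
  ((1 / (2 * α) * ((y - z) ⬝ᵥ (D *ᵥ (y - z))) : ℝ) : EReal) + f₁ y + (C : EReal)

/-- Dual function `Ψ(v) = −(1/(2α))‖αD⁻¹Aᵀv − z‖²_D − g*(v) + (1/(2α))‖z‖²_D + C`. -/
noncomputable def dualFn {n m : ℕ} (α : ℝ) (D : Matrix (Fin n) (Fin n) ℝ)
    (A : Matrix (Fin m) (Fin n) ℝ) (z : Fin n → ℝ) (g : (Fin m → ℝ) → EReal) (C : ℝ)
    (v : Fin m → ℝ) : EReal :=
  (-(1 / (2 * α) *
      ((α • (D⁻¹ *ᵥ (Aᵀ *ᵥ v)) - z) ⬝ᵥ (D *ᵥ (α • (D⁻¹ *ᵥ (Aᵀ *ᵥ v)) - z))) : ℝ) : EReal)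
    - conjFn g v + ((1 / (2 * α) * (z ⬝ᵥ (D *ᵥ z)) : ℝ) : EReal) + (C : EReal)

theorem stmt_16 (n m : ℕ) (g : (Fin m → ℝ) → EReal)
    (hgconv : ∀ u v : Fin m → ℝ, ∀ a b : ℝ, 0 ≤ a → 0 ≤ b → a + b = 1 →
      g (a • u + b • v) ≤ (a : EReal) * g u + (b : EReal) * g v)
    (hgproper : ∃ u, g u ≠ ⊤) (hgbot : ∀ u, g u ≠ ⊥) (hglsc : LowerSemicontinuous g)
    (A : Matrix (Fin m) (Fin n) ℝ)
    (f₁ : (Fin n → ℝ) → EReal) (hf₁ : ∀ x : Fin n → ℝ, f₁ x = g (A *ᵥ x))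
    (α : ℝ) (hα : 0 < α)
    (D : Matrix (Fin n) (Fin n) ℝ) (hDsym : D.IsSymm) (hDpd : D.PosDef)
    (z : Fin n → ℝ) (v : Fin m → ℝ) (C : ℝ)
    (ty : Fin n → ℝ) (hty : ty = z - α • (D⁻¹ *ᵥ (Aᵀ *ᵥ v)))
    (ε : ℝ) (hε : 0 ≤ ε)
    (hgap : primalFn α D z f₁ C ty - dualFn α D A z g C v ≤ (ε : EReal)) :
    α⁻¹ • (D *ᵥ (z - ty)) ∈ epsSubdiff f₁ ε ty := by
  have hα' : α ≠ 0 := hα.ne'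
  set u : Fin n → ℝ := Aᵀ *ᵥ v with hu
  set p : Fin n → ℝ := D⁻¹ *ᵥ (Aᵀ *ᵥ v) with hp
  have hDp : D *ᵥ p = u := by
    rw [hp, mulVec_mulVec, Matrix.mul_nonsing_inv _ (isUnit_iff_ne_zero.mpr hDpd.det_pos.ne'),
      one_mulVec]
  have hsym : ∀ a b : Fin n → ℝ, a ⬝ᵥ (D *ᵥ b) = b ⬝ᵥ (D *ᵥ a) := by
    intro a b
    rw [dotProduct_mulVec, ← mulVec_transpose, hDsym.eq, dotProduct_comm]
  have hudot : ∀ x : Fin n → ℝ, u ⬝ᵥ x = v ⬝ᵥ (A *ᵥ x) := by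
    intro x
    rw [hu, mulVec_transpose, ← dotProduct_mulVec]
  -- the vector in the statement is Aᵀ v
  have hw : α⁻¹ • (D *ᵥ (z - ty)) = u := by
    rw [hty, sub_sub_cancel, mulVec_smul, hDp, smul_smul, inv_mul_cancel₀ hα', one_smul]
  -- quadratic identity
  have hquad : (1 / (2 * α) * ((ty - z) ⬝ᵥ (D *ᵥ (ty - z)))) +
      (1 / (2 * α) * ((α • p - z) ⬝ᵥ (D *ᵥ (α • p - z)))) -
      (1 / (2 * α) * (z ⬝ᵥ (D *ᵥ z))) = -(u ⬝ᵥ ty) := by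
    subst hty
    have h1 : p ⬝ᵥ (D *ᵥ z) = z ⬝ᵥ u := by rw [hsym, hDp]
    simp only [mulVec_sub, mulVec_smul, dotProduct_sub, sub_dotProduct, dotProduct_smul,
      smul_dotProduct, hDp, h1, smul_eq_mul, sub_sub_cancel_left, neg_dotProduct,
      dotProduct_neg, mulVec_neg, neg_neg]
    have h2 : u ⬝ᵥ p = p ⬝ᵥ u := dotProduct_comm _ _
    have h3 : u ⬝ᵥ z = z ⬝ᵥ u := dotProduct_comm _ _
    rw [h2, h3]; field_simp; ring
  -- conjugate is not ⊥
  obtain ⟨u₀, hu₀⟩ := hgproper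
  have hfen : ∀ x : Fin m → ℝ, ((x ⬝ᵥ v : ℝ) : EReal) - g x ≤ conjFn g v := by
    intro x; exact le_iSup (fun x => ((x ⬝ᵥ v : ℝ) : EReal) - g x) x
  have hconj_ne_bot : conjFn g v ≠ ⊥ := by
    intro h
    have h0 := hfen u₀
    rw [h, ← EReal.coe_toReal hu₀ (hgbot u₀), ← EReal.coe_sub] at h0
    exact (EReal.coe_ne_bot _) (le_bot_iff.mp h0)
  have hty_ne_bot : f₁ ty ≠ ⊥ := by rw [hf₁]; exact hgbot _
  have hprimal_ne_bot : primalFn α D z f₁ C ty ≠ ⊥ := by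
    rw [primalFn]
    intro h
    rcases EReal.add_eq_bot_iff.mp h with h | h
    · rcases EReal.add_eq_bot_iff.mp h with h | h
      · exact EReal.coe_ne_bot _ h
      · exact hty_ne_bot h
    · exact EReal.coe_ne_bot _ h
  have hconj_ne_top : conjFn g v ≠ ⊤ := by
    intro h
    have hdual_bot : dualFn α D A z g C v = ⊥ := by
      rw [dualFn, h]
      rw [EReal.sub_top, EReal.bot_add, EReal.bot_add]
    rw [hdual_bot, sub_eq_add_neg, EReal.neg_bot,
      EReal.add_top_of_ne_bot hprimal_ne_bot] at hgap
    exact (EReal.coe_ne_top ε) (top_le_iff.mp hgap)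
  set gc : ℝ := (conjFn g v).toReal with hgc
  have hgcval : conjFn g v = (gc : EReal) := (EReal.coe_toReal hconj_ne_top hconj_ne_bot).symm
  -- dual is real
  have hdual : dualFn α D A z g C v =
      ((-(1 / (2 * α) * ((α • p - z) ⬝ᵥ (D *ᵥ (α • p - z)))) - gc
        + 1 / (2 * α) * (z ⬝ᵥ (D *ᵥ z)) + C : ℝ) : EReal) := by
    rw [dualFn, hgcval]
    push_cast
    rfl
  -- f₁ ty is real
  have hty_ne_top : f₁ ty ≠ ⊤ := by
    intro h
    have hprimal_top : primalFn α D z f₁ C ty = ⊤ := by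
      rw [primalFn, h, EReal.coe_add_top, EReal.top_add_of_ne_bot (EReal.coe_ne_bot _)]
    rw [hprimal_top, hdual, EReal.top_sub_coe] at hgap
    exact (EReal.coe_ne_top ε) (top_le_iff.mp hgap)
  set gt : ℝ := (f₁ ty).toReal with hgt
  have hgtval : f₁ ty = (gt : EReal) := (EReal.coe_toReal hty_ne_top hty_ne_bot).symm
  -- real gap inequality
  have hgapR : gt + gc ≤ ε + v ⬝ᵥ (A *ᵥ ty) := by
    rw [primalFn, hgtval, hdual, ← EReal.coe_add, ← EReal.coe_add, ← EReal.coe_sub,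
      EReal.coe_le_coe_iff] at hgap
    have := hquad
    rw [hudot] at this
    nlinarith [hgap, this]
  -- main goal
  intro y
  have hgty : g (A *ᵥ ty) = (gt : EReal) := by rw [← hf₁]; exact hgtval
  rw [hf₁, hf₁, hgty]
  rcases eq_or_ne (g (A *ᵥ y)) ⊤ with hgy | hgy
  · rw [hgy]; exact le_top
  have hgyval : g (A *ᵥ y) = (((g (A *ᵥ y)).toReal : ℝ) : EReal) :=
    (EReal.coe_toReal hgy (hgbot _)).symm
  set gy : ℝ := (g (A *ᵥ y)).toReal
  have hfy := hfen (A *ᵥ y)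
  rw [hgyval, hgcval, ← EReal.coe_sub, EReal.coe_le_coe_iff] at hfy
  rw [hgyval, hw, ← EReal.coe_add, ← EReal.coe_sub, EReal.coe_le_coe_iff]
  have hud : u ⬝ᵥ (y - ty) = v ⬝ᵥ (A *ᵥ y) - v ⬝ᵥ (A *ᵥ ty) := by
    rw [hudot, mulVec_sub, dotProduct_sub]
  rw [hud]
  have hc : (A *ᵥ y) ⬝ᵥ v = v ⬝ᵥ (A *ᵥ y) := dotProduct_comm _ _
  linarith [hfy, hgapR, hc ▸ hfy]
end
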